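/- arXiv:2503.13173 — 3 statements merged into one kernel-verified Lean document; each statement's English description precedes it below -/
import Mathlib

section
/- With the averaging reward Φ_g(S) = (1/m)∑_{k∈S} g_k and Φ_p(S) = (1/m)∑_{k∈S} p_k, the set maximizing min_{k∈S} ucb(k) + (α/m)∑_{k∈S} g_k + (γ/m)∑_{k∈S} p_k over m-subsets S ⊆ K can be found as follows: for each candidate pivot k (the ucb-minimizer of the chosen set), the optimal completion consists of the m−1 users with the largest values of α g_ℓ + γ p_ℓ among users ℓ with ucb(ℓ) ≥ ucb(k). The maximum over all pivots of pivot-plus-best-completion equals the global maximum. -/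
/-!
Split the optimal set at its `ucb`-minimiser `k`, the pivot. Its value is `ucb k` plus the
averaged weight of `k` and of the remaining `m - 1` users, all of which lie above the pivot, so
replacing them by a heaviest `(m - 1)`-set above the pivot can only increase the value.
Conversely every pivot together with such a completion is itself an `m`-set whose minimum is
attained at the pivot. Hence every value on the left is dominated by one on the right and every
value on the right occurs on the left, which forces equal suprema even without boundedness.
-/

section PivotAndFill

open Finset

variable {ι : Type*}

theorem csInf_image_eq_of_forall_le {α : Type*} [ConditionallyCompleteLattice α] {f : ι → α}
    {s : Set ι} {k : ι} (hk : k ∈ s) (hmin : ∀ ℓ ∈ s, f k ≤ f ℓ) : sInf (f '' s) = f k :=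
  IsLeast.csInf_eq ⟨⟨k, hk, rfl⟩, by rintro _ ⟨ℓ, hℓ, rfl⟩; exact hmin ℓ hℓ⟩

theorem exists_card_eq_forall_sum_le {β : Type*} [AddCommMonoid β] [LinearOrder β] [Finite ι]
    (w : ι → β) (P : ι → Prop) {n : ℕ} (h : ∃ t : Finset ι, t.card = n ∧ ∀ ℓ ∈ t, P ℓ) :
    ∃ t : Finset ι, t.card = n ∧ (∀ ℓ ∈ t, P ℓ) ∧
      ∀ t' : Finset ι, t'.card = n → (∀ ℓ ∈ t', P ℓ) → ∑ ℓ ∈ t', w ℓ ≤ ∑ ℓ ∈ t, w ℓ := by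
  obtain ⟨t, ⟨hcard, hP⟩, hmax⟩ :=
    Set.exists_max_image {t : Finset ι | t.card = n ∧ ∀ ℓ ∈ t, P ℓ} (fun t ↦ ∑ ℓ ∈ t, w ℓ)
      (Set.toFinite _) h
  exact ⟨t, hcard, hP, fun t' hcard' hP' ↦ hmax t' ⟨hcard', hP'⟩⟩

variable (f w : ι → ℝ)

theorem exists_pivot_completion_ge [Finite ι] {c : ℝ} (hc : 0 ≤ c) {S : Finset ι}
    (hS : S.Nonempty) :
    ∃ (k : ι) (T : Finset ι), T.card = S.card - 1 ∧ (∀ ℓ ∈ T, ℓ ≠ k ∧ f k ≤ f ℓ) ∧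
      (∀ T' : Finset ι, T'.card = S.card - 1 → (∀ ℓ ∈ T', ℓ ≠ k ∧ f k ≤ f ℓ) →
        ∑ ℓ ∈ T', w ℓ ≤ ∑ ℓ ∈ T, w ℓ) ∧
      sInf (f '' ↑S) + c * ∑ ℓ ∈ S, w ℓ ≤ f k + c * (w k + ∑ ℓ ∈ T, w ℓ) := by
  classical
  obtain ⟨k, hkS, hmin⟩ := S.exists_min_image f hS
  have hrest : (S.erase k).card = S.card - 1 ∧ ∀ ℓ ∈ S.erase k, ℓ ≠ k ∧ f k ≤ f ℓ :=
    ⟨card_erase_of_mem hkS,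
      fun ℓ hℓ ↦ ⟨ne_of_mem_erase hℓ, hmin ℓ (mem_of_mem_erase hℓ)⟩⟩
  obtain ⟨T, hTcard, hT, hTmax⟩ := exists_card_eq_forall_sum_le w _ ⟨S.erase k, hrest⟩
  refine ⟨k, T, hTcard, hT, hTmax, ?_⟩
  calc sInf (f '' ↑S) + c * ∑ ℓ ∈ S, w ℓ = f k + c * (w k + ∑ ℓ ∈ S.erase k, w ℓ) := by
        rw [csInf_image_eq_of_forall_le (mem_coe.mpr hkS) hmin, add_sum_erase S w hkS]
    _ ≤ f k + c * (w k + ∑ ℓ ∈ T, w ℓ) := by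
        gcongr f k + c * (w k + ?_)
        exact hTmax _ hrest.1 hrest.2

theorem csInf_image_insert_add_sum [DecidableEq ι] (c : ℝ) {k : ι} {T : Finset ι}
    (hT : ∀ ℓ ∈ T, ℓ ≠ k ∧ f k ≤ f ℓ) :
    sInf (f '' ↑(insert k T)) + c * ∑ ℓ ∈ insert k T, w ℓ = f k + c * (w k + ∑ ℓ ∈ T, w ℓ) := by
  have hk : k ∉ T := fun h ↦ (hT k h).1 rfl
  have hmin : ∀ ℓ ∈ (↑(insert k T) : Set ι), f k ≤ f ℓ := by
    intro ℓ hℓ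
    rcases mem_insert.mp hℓ with rfl | hℓ
    exacts [le_rfl, (hT ℓ hℓ).2]
  rw [csInf_image_eq_of_forall_le (by simp) hmin, sum_insert hk]

end PivotAndFill

theorem stmt_12_general {ι : Type*} [Fintype ι]
    (ucb g p : ι → ℝ) (α γ : ℝ)
    (m : ℕ) (hm : 1 ≤ m) :
    sSup {x : ℝ | ∃ S : Finset ι, S.card = m ∧
        x = sInf (ucb '' ↑S) + (1 / (m : ℝ)) * ∑ ℓ ∈ S, (α * g ℓ + γ * p ℓ)}
      = sSup {x : ℝ | ∃ (k : ι) (T : Finset ι),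
          T.card = m - 1 ∧
          (∀ ℓ ∈ T, ℓ ≠ k ∧ ucb k ≤ ucb ℓ) ∧
          (∀ T' : Finset ι, T'.card = m - 1 → (∀ ℓ ∈ T', ℓ ≠ k ∧ ucb k ≤ ucb ℓ) →
            ∑ ℓ ∈ T', (α * g ℓ + γ * p ℓ) ≤ ∑ ℓ ∈ T, (α * g ℓ + γ * p ℓ)) ∧
          x = ucb k + (1 / (m : ℝ)) *
                (α * g k + γ * p k + ∑ ℓ ∈ T, (α * g ℓ + γ * p ℓ))} := by
  classical
  apply csSup_eq_csSup_of_forall_exists_le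
  · rintro x ⟨S, rfl, rfl⟩
    have hc : (0 : ℝ) ≤ 1 / (S.card : ℝ) := by positivity
    obtain ⟨k, T, hcard, hT, hTmax, hle⟩ := exists_pivot_completion_ge ucb
      (fun ℓ ↦ α * g ℓ + γ * p ℓ) hc (Finset.card_pos.mp hm)
    exact ⟨_, ⟨k, T, hcard, hT, hTmax, rfl⟩, hle⟩
  · rintro y ⟨k, T, hcard, hT, -, rfl⟩
    have hk : k ∉ T := fun h ↦ (hT k h).1 rfl
    refine ⟨_, ⟨insert k T, by rw [Finset.card_insert_of_notMem hk]; omega, rfl⟩, ?_⟩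
    rw [csInf_image_insert_add_sum ucb _ _ hT]

/-- Correctness of Pivot-and-Fill (Proposition 1): with the averaging reward, the maximum
of `f(S) = min_{k∈S} ucb(k) + (1/m)∑_{k∈S}(α g_k + γ p_k)` over `m`-subsets equals the
maximum over pivots `k` of `ucb(k)` plus the value of the best completion, where the best
completion is a size-`(m−1)` subset of `{ℓ ≠ k : ucb(ℓ) ≥ ucb(k)}` maximizing
`∑ (α g_ℓ + γ p_ℓ)`. -/
theorem stmt_12 {ι : Type*} [Fintype ι] [DecidableEq ι]
    (ucb g p : ι → ℝ) (α γ : ℝ) (hα : 0 ≤ α) (hγ : 0 ≤ γ)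
    (hinj : Function.Injective ucb)
    (m : ℕ) (hm : 1 ≤ m) (hmK : m ≤ Fintype.card ι) :
    sSup {x : ℝ | ∃ S : Finset ι, S.card = m ∧
        x = sInf (ucb '' ↑S) + (1 / (m : ℝ)) * ∑ ℓ ∈ S, (α * g ℓ + γ * p ℓ)}
      = sSup {x : ℝ | ∃ (k : ι) (T : Finset ι),
          T.card = m - 1 ∧
          (∀ ℓ ∈ T, ℓ ≠ k ∧ ucb k ≤ ucb ℓ) ∧
          (∀ T' : Finset ι, T'.card = m - 1 → (∀ ℓ ∈ T', ℓ ≠ k ∧ ucb k ≤ ucb ℓ) →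
            ∑ ℓ ∈ T', (α * g ℓ + γ * p ℓ) ≤ ∑ ℓ ∈ T, (α * g ℓ + γ * p ℓ)) ∧
          x = ucb k + (1 / (m : ℝ)) *
                (α * g k + γ * p k + ∑ ℓ ∈ T, (α * g ℓ + γ * p ℓ))} :=
  stmt_12_general ucb g p α γ m hm
end

section
/- In the SA-PAUSE graph on m-subsets of K (vertices are m-subsets; U is an active neighbor of V iff they differ in one user and the user in V \ U is the ucb-minimizer of V; edges are symmetric), the graph is connected: for any two vertices V, U there is a path of neighboring vertices from V to U. -/
/-!
Let `W` consist of `m` users of `V ∪ U` with the largest `ucb` values. Starting from `V`,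
let `v` be the user of `V \ W` with the smallest `ucb`; since every user of `W` beats every
user outside it, `v` is a `ucb`-minimizer of all of `V`. Swapping `v` for a user of `W \ V`
is therefore an edge of the graph, and it shrinks `W \ V` by one, so `V` reaches `W`.
The same holds for `U`, and edges are symmetric.
-/

open Finset Relation

section

variable {ι : Type*} [DecidableEq ι] (ucb : ι → ℝ)

theorem Finset.exists_subset_card_eq_forall_sdiff_le (n : ℕ) (s : Finset ι) (hs : n ≤ s.card) :
    ∃ t ⊆ s, t.card = n ∧ ∀ x ∈ t, ∀ y ∈ s \ t, ucb y ≤ ucb x := by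
  induction n generalizing s with
  | zero => exact ⟨∅, empty_subset s, rfl, by simp⟩
  | succ n ih =>
    obtain ⟨a, ha, hmax⟩ := exists_max_image s ucb (card_pos.mp (by omega))
    obtain ⟨t, hts, htc, htop⟩ := ih (s.erase a) (by rw [card_erase_of_mem ha]; omega)
    have hat : a ∉ t := fun h => (mem_erase.mp (hts h)).1 rfl
    refine ⟨insert a t, insert_subset ha (hts.trans (erase_subset a s)), ?_, ?_⟩
    · rw [card_insert_of_notMem hat, htc]
    · intro x hx y hy
      simp only [mem_sdiff, mem_insert, not_or] at hy
      rcases mem_insert.mp hx with rfl | hx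
      · exact hmax y hy.1
      · exact htop x hx y (mem_sdiff.mpr ⟨mem_erase.mpr ⟨hy.2.1, hy.1⟩, hy.2.2⟩)

def DropsMinimizer (V U : Finset ι) : Prop :=
  ∃ k ∈ V, k ∉ U ∧ ∀ k' ∈ V, ucb k ≤ ucb k'

/-- Adjacency in the SA-PAUSE graph on `m`-subsets. -/
def SAPauseAdj (m : ℕ) (V U : Finset ι) : Prop :=
  V.card = m ∧ U.card = m ∧ (V ∩ U).card = m - 1 ∧
    (DropsMinimizer ucb V U ∨ DropsMinimizer ucb U V)

instance (m : ℕ) : Std.Symm (SAPauseAdj ucb m) where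
  symm _ _ := fun ⟨hV, hU, hVU, hdrop⟩ => ⟨hU, hV, by rwa [inter_comm], hdrop.symm⟩

theorem saPauseAdj_swap {m : ℕ} {V : Finset ι} {v w : ι} (hV : V.card = m) (hv : v ∈ V)
    (hvmin : ∀ k ∈ V, ucb v ≤ ucb k) (hw : w ∉ V) :
    SAPauseAdj ucb m V (insert w (V.erase v)) := by
  have hwV : w ∉ V.erase v := fun h => hw (mem_of_mem_erase h)
  have hinter : V ∩ insert w (V.erase v) = V.erase v := by
    rw [inter_insert_of_notMem hw, inter_eq_right.mpr (erase_subset v V)]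
  refine ⟨hV, ?_, ?_, Or.inl ⟨v, hv, ?_, hvmin⟩⟩
  · rw [card_insert_of_notMem hwV, card_erase_of_mem hv, hV]
    have : 0 < m := hV ▸ card_pos.mpr ⟨v, hv⟩
    omega
  · rw [hinter, card_erase_of_mem hv, hV]
  · simp only [mem_insert, mem_erase, ne_eq, not_true_eq_false, false_and, or_false]
    rintro rfl
    exact hw hv

theorem reflTransGen_saPauseAdj_of_forall_sdiff_le {m : ℕ} {S W : Finset ι}
    (hWS : W ⊆ S) (hW : ∀ x ∈ W, ∀ y ∈ S \ W, ucb y ≤ ucb x) (hWc : W.card = m)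
    {V : Finset ι} (hVS : V ⊆ S) (hV : V.card = m) : ReflTransGen (SAPauseAdj ucb m) V W := by
  induction h : (W \ V).card generalizing V with
  | zero =>
    have hWV : W ⊆ V := sdiff_eq_empty_iff_subset.mp (card_eq_zero.mp h)
    rw [eq_of_subset_of_card_le hWV (by omega)]
  | succ n ih =>
    obtain ⟨w, hw⟩ : (W \ V).Nonempty := card_pos.mp (by omega)
    have hVW : (V \ W).Nonempty := card_pos.mp (by rw [card_sdiff_comm (by omega)]; omega)
    obtain ⟨v, hv, hvmin⟩ := exists_min_image (V \ W) ucb hVW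
    rw [mem_sdiff] at hw hv
    have hvminV : ∀ k ∈ V, ucb v ≤ ucb k := fun k hk => by
      by_cases hkW : k ∈ W
      · exact hW k hkW v (mem_sdiff.mpr ⟨hVS hv.1, hv.2⟩)
      · exact hvmin k (mem_sdiff.mpr ⟨hk, hkW⟩)
    have hedge := saPauseAdj_swap ucb hV hv.1 hvminV hw.2
    refine .head hedge (ih ?_ hedge.2.1 ?_)
    · exact insert_subset (hWS hw.1) ((erase_subset v V).trans hVS)
    · have hsdiff : W \ insert w (V.erase v) = (W \ V).erase w := by
        ext x
        simp only [mem_sdiff, mem_insert, mem_erase, not_or]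
        constructor
        · rintro ⟨hxW, hxw, hxV⟩
          exact ⟨hxw, hxW, fun hx => hxV ⟨fun hxv => hv.2 (hxv ▸ hxW), hx⟩⟩
        · rintro ⟨hxw, hxW, hxV⟩
          exact ⟨hxW, hxw, fun h => hxV h.2⟩
      rw [hsdiff, card_erase_of_mem (mem_sdiff.mpr hw), h, Nat.add_sub_cancel]

end

theorem stmt_16_general {ι : Type*} [DecidableEq ι] (ucb : ι → ℝ) (m : ℕ) :
    ∀ V U : Finset ι, V.card = m → U.card = m →
      Relation.ReflTransGen
        (fun V U : Finset ι =>
          V.card = m ∧ U.card = m ∧ (V ∩ U).card = m - 1 ∧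
          ((∃ k ∈ V, k ∉ U ∧ ∀ k' ∈ V, ucb k ≤ ucb k') ∨
           (∃ k ∈ U, k ∉ V ∧ ∀ k' ∈ U, ucb k ≤ ucb k')))
        V U := by
  intro V U hV hU
  obtain ⟨W, hWS, hWc, hW⟩ := exists_subset_card_eq_forall_sdiff_le ucb m (V ∪ U)
    (hV ▸ card_le_card subset_union_left)
  have hVW := reflTransGen_saPauseAdj_of_forall_sdiff_le ucb hWS hW hWc subset_union_left hV
  have hUW := reflTransGen_saPauseAdj_of_forall_sdiff_le ucb hWS hW hWc subset_union_right hU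
  exact hVW.trans (symm hUW)

/-- The SA-PAUSE neighbor graph on `m`-subsets (where `V` and `U` are adjacent iff they
differ in exactly one user and the distinct user of one of them minimizes `ucb` on its
set) is connected: any two `m`-subsets are joined by a path of neighboring vertices. -/
theorem stmt_16 {ι : Type*} [Fintype ι] [DecidableEq ι] (ucb : ι → ℝ)
    (hinj : Function.Injective ucb) (m : ℕ) (hm : 1 ≤ m) (hmK : m < Fintype.card ι) :
    ∀ V U : Finset ι, V.card = m → U.card = m →
      Relation.ReflTransGen
        (fun V U : Finset ι =>
          V.card = m ∧ U.card = m ∧ (V ∩ U).card = m - 1 ∧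
          ((∃ k ∈ V, k ∉ U ∧ ∀ k' ∈ V, ucb k ≤ ucb k') ∨
           (∃ k ∈ U, k ∉ V ∧ ∀ k' ∈ U, ucb k ≤ ucb k')))
        V U :=
  stmt_16_general ucb m
end

section
/- In the path construction algorithm from V_0 to U, at each iteration either the conditional 'min ucb in V_j ≤ max ucb in U \ V_j' holds and the constructed V_{j+1} is an active neighbor of V_j, or it fails and V_{j+1} is a passive neighbor of V_j; moreover, once the conditional becomes false it remains false for all subsequent iterations. -/
open Finset

/-- If an infinite run of the algorithm never reaches `U`, we get a contradiction. -/
lemma no_infinite_run {ι : Type*} [Fintype ι] [DecidableEq ι] (ucb : ι → ℝ)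
    (hinj : Function.Injective ucb) (U : Finset ι) (W : ℕ → Finset ι)
    (hup : ∀ i, ∃ b ∈ U \ W i, (∀ k ∈ U \ W i, ucb k ≤ ucb b) ∧
      ((∃ a ∈ W i, (∀ k ∈ W i, ucb a ≤ ucb k) ∧ ucb a ≤ ucb b ∧
          W (i + 1) = insert b ((W i).erase a)) ∨
       ((∀ a ∈ W i, ucb b < ucb a) ∧
          ∃ p ∈ W i \ U, W (i + 1) = insert b ((W i).erase p)))) : False := by
  classical
  set f : ℕ → ℕ := fun i => ((W i) \ U).card with hf
  -- f is non-increasing, and passive steps strictly decrease it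
  have hstep : ∀ i, f (i+1) ≤ f i := by
    intro i
    obtain ⟨b, hb, -, hcase⟩ := hup i
    have hbU : b ∈ U := (mem_sdiff.1 hb).1
    rcases hcase with ⟨a, ha, -, -, hW⟩ | ⟨-, p, hp, hW⟩ <;>
    · refine card_le_card ?_
      rw [hW]
      intro k hk
      rw [mem_sdiff] at hk ⊢
      obtain ⟨hk1, hk2⟩ := hk
      rcases mem_insert.1 hk1 with rfl | hk1
      · exact absurd hbU hk2
      · exact ⟨mem_of_mem_erase hk1, hk2⟩
  have hmono : ∀ i i', i ≤ i' → f i' ≤ f i := by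
    intro i i' h
    induction i' with
    | zero => simp_all
    | succ n ih =>
      rcases Nat.lt_or_ge i (n+1) with h' | h'
      · exact le_trans (hstep n) (ih (Nat.lt_succ_iff.1 h'))
      · have : i = n + 1 := le_antisymm h h'
        simp [this]
  -- f is eventually constant
  obtain ⟨N, hN⟩ : ∃ N, f N = sInf (Set.range f) := by
    have : sInf (Set.range f) ∈ Set.range f := Nat.sInf_mem ⟨f 0, 0, rfl⟩
    exact this
  have hconst : ∀ i, N ≤ i → f i = f N := by
    intro i hi
    refine le_antisymm (hmono N i hi) ?_
    rw [hN]
    exact Nat.sInf_le ⟨i, rfl⟩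
  -- beyond N every step is active; extract the minimizer
  have key : ∀ i, ∃ a, a ∈ W (N + i) ∧ (∀ k ∈ W (N + i), ucb a ≤ ucb k) ∧
      ∃ b, b ∉ W (N + i) ∧ ucb a ≤ ucb b ∧
        W (N + i + 1) = insert b ((W (N + i)).erase a) := by
    intro i
    obtain ⟨b, hb, -, hcase⟩ := hup (N + i)
    obtain ⟨hbU, hbW⟩ := mem_sdiff.1 hb
    rcases hcase with ⟨a, ha, hmin, hab, hW⟩ | ⟨-, p, hp, hW⟩
    · exact ⟨a, ha, hmin, b, hbW, hab, hW⟩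
    · -- passive step: f strictly decreases, contradiction
      exfalso
      obtain ⟨hpW, hpU⟩ := mem_sdiff.1 hp
      have hsub : W (N + i + 1) \ U ⊆ (W (N + i) \ U).erase p := by
        rw [hW]
        intro k hk
        rw [mem_sdiff] at hk
        obtain ⟨hk1, hk2⟩ := hk
        rcases mem_insert.1 hk1 with rfl | hk1
        · exact absurd hbU hk2
        · rw [mem_erase] at hk1 ⊢
          exact ⟨hk1.1, mem_sdiff.2 ⟨hk1.2, hk2⟩⟩
      have hlt : f (N + i + 1) < f (N + i) := by
        calc f (N + i + 1) ≤ ((W (N + i) \ U).erase p).card := card_le_card hsub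
        _ < (W (N + i) \ U).card := card_erase_lt_of_mem (mem_sdiff.2 ⟨hpW, hpU⟩)
      have h1 := hconst (N + i) (Nat.le_add_right N i)
      have h2 := hconst (N + i + 1) (le_trans (Nat.le_add_right N i) (Nat.le_succ _))
      omega
  choose g hg1 hg2 hg3 using key
  -- ucb ∘ g is strictly monotone
  have hsm : StrictMono (fun i => ucb (g i)) := by
    refine strictMono_nat_of_lt_succ (fun i => ?_)
    obtain ⟨b, hbW, hab, hW⟩ := hg3 i
    have hgi1 : g (i+1) ∈ W (N + i + 1) := by
      have := hg1 (i+1); rwa [show N + (i+1) = N + i + 1 from rfl] at this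
    rw [hW, mem_insert] at hgi1
    rcases hgi1 with rfl | hgi1
    · -- g (i+1) = b
      have hle : ucb (g i) ≤ ucb (g (i+1)) := le_trans (le_refl _) hab
      rcases lt_or_eq_of_le hle with h | h
      · exact h
      · exact absurd (hg1 i) (hinj h ▸ hbW)
    · rw [mem_erase] at hgi1
      have hle : ucb (g i) ≤ ucb (g (i+1)) := hg2 i _ hgi1.2
      rcases lt_or_eq_of_le hle with h | h
      · exact h
      · exact absurd (hinj h).symm hgi1.1
  have ginj : Function.Injective g := fun i i' h =>
    hsm.injective (by simp [h])
  have : Finite ℕ := Finite.of_injective g ginj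
  exact not_finite ℕ

/-- Properties of the path-construction algorithm from `V₀` to `U` (Algorithm 4): given the
update rule (where `b` is the `ucb`-maximizer of `U \ V_j`; if the `ucb`-minimizer `a` of
`V_j` satisfies `ucb a ≤ ucb b` the active step replaces `a` by `b`, otherwise a passive
step replaces some `p ∈ V_j \ U` by `b`), at each iteration with `V_j ≠ U`:
(i) `|V_j ∩ V_{j+1}| = m − 1`;
(ii) the step is an active or a passive neighbor transition, i.e. either the removed user
`k ∈ V_j \ V_{j+1}` minimizes `ucb` over `V_j`, or the added user `k ∈ V_{j+1} \ V_j`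
minimizes `ucb` over `V_{j+1}`;
(iii) once the conditional fails (all of `U \ V_j` has `ucb` below all of `V_j`), it keeps
failing at the next iteration. -/
theorem stmt_17 {ι : Type*} [Fintype ι] [DecidableEq ι] (ucb : ι → ℝ)
    (hinj : Function.Injective ucb) (m : ℕ) (hm : 1 ≤ m)
    (U : Finset ι) (hU : U.card = m)
    (V : ℕ → Finset ι) (hV0 : (V 0).card = m)
    (hup : ∀ j, V j ≠ U →
      ∃ b ∈ U \ V j, (∀ k ∈ U \ V j, ucb k ≤ ucb b) ∧
        ((∃ a ∈ V j, (∀ k ∈ V j, ucb a ≤ ucb k) ∧ ucb a ≤ ucb b ∧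
            V (j + 1) = insert b ((V j).erase a)) ∨
         ((∀ a ∈ V j, ucb b < ucb a) ∧
            ∃ p ∈ V j \ U, V (j + 1) = insert b ((V j).erase p)))) :
    ∀ j, V j ≠ U →
      ((V j ∩ V (j + 1)).card = m - 1) ∧
      ((∃ k ∈ V j, k ∉ V (j + 1) ∧ ∀ k' ∈ V j, ucb k ≤ ucb k') ∨
       (∃ k ∈ V (j + 1), k ∉ V j ∧ ∀ k' ∈ V (j + 1), ucb k ≤ ucb k')) ∧
      ((∀ a ∈ V j, ∀ b ∈ U \ V j, ucb b < ucb a) → V (j + 1) ≠ U →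
        ∀ a ∈ V (j + 1), ∀ b ∈ U \ V (j + 1), ucb b < ucb a) := by
  classical
  -- step form: each step (from a non-U set) replaces x ∈ V j by b ∉ V j
  have hstep : ∀ i, V i ≠ U → ∃ b x, b ∉ V i ∧ x ∈ V i ∧
      V (i+1) = insert b ((V i).erase x) := by
    intro i hi
    obtain ⟨b, hb, -, hcase⟩ := hup i hi
    have hbW : b ∉ V i := (mem_sdiff.1 hb).2
    rcases hcase with ⟨a, ha, -, -, hW⟩ | ⟨-, p, hp, hW⟩
    · exact ⟨b, a, hbW, ha, hW⟩
    · exact ⟨b, p, hbW, (mem_sdiff.1 hp).1, hW⟩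
  have hcardstep : ∀ i, V i ≠ U → (V (i+1)).card = (V i).card := by
    intro i hi
    obtain ⟨b, x, hb, hx, hW⟩ := hstep i hi
    rw [hW, card_insert_of_notMem (fun h => hb (mem_of_mem_erase h)),
      card_erase_of_mem hx]
    have : 1 ≤ (V i).card := card_pos.2 ⟨x, hx⟩
    omega
  intro j hj
  -- the current set has cardinality m
  have hcardj : (V j).card = m := by
    by_contra hcm
    have hall : ∀ i, (V (j + i)).card = (V j).card ∧ V (j + i) ≠ U := by
      intro i
      induction i with
      | zero => exact ⟨rfl, hj⟩
      | succ n ih =>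
        have h1 : (V (j + (n+1))).card = (V j).card := by
          rw [show j + (n+1) = (j + n) + 1 from rfl, hcardstep _ ih.2, ih.1]
        exact ⟨h1, fun h => hcm (by rw [← ih.1, ← hcardstep _ ih.2,
          show (j + n) + 1 = j + (n+1) from rfl, h, hU])⟩
    exact no_infinite_run ucb hinj U (fun i => V (j + i))
      (fun i => by simpa [show j + i + 1 = j + (i+1) from rfl] using hup (j + i) (hall i).2)
  obtain ⟨b, hb, hbmax, hcase⟩ := hup j hj
  obtain ⟨hbU, hbV⟩ := mem_sdiff.1 hb
  obtain ⟨b', x, hb', hx, hW⟩ : ∃ b' x, b' ∉ V j ∧ x ∈ V j ∧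
      V (j+1) = insert b' ((V j).erase x) := by
    rcases hcase with ⟨a, ha, -, -, hW⟩ | ⟨-, p, hp, hW⟩
    · exact ⟨b, a, hbV, ha, hW⟩
    · exact ⟨b, p, hbV, (mem_sdiff.1 hp).1, hW⟩
  refine ⟨?_, ?_, ?_⟩
  · -- (i) cardinality of the intersection
    have hinter : V j ∩ V (j+1) = (V j).erase x := by
      rw [hW]
      ext k
      simp only [mem_inter, mem_insert, mem_erase]
      constructor
      · rintro ⟨hk, rfl | ⟨hkx, -⟩⟩
        · exact absurd hk hb'
        · exact ⟨hkx, hk⟩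
      · rintro ⟨hkx, hk⟩
        exact ⟨hk, Or.inr ⟨hkx, hk⟩⟩
    rw [hinter, card_erase_of_mem hx, hcardj]
  · -- (ii) active or passive neighbor
    rcases hcase with ⟨a, ha, hmin, -, hW'⟩ | ⟨hblt, p, hp, hW'⟩
    · refine Or.inl ⟨a, ha, ?_, hmin⟩
      rw [hW', mem_insert]
      rintro (rfl | h)
      · exact hbV ha
      · exact (mem_erase.1 h).1 rfl
    · refine Or.inr ⟨b, by rw [hW']; exact mem_insert_self _ _, hbV, ?_⟩
      intro k' hk'
      rw [hW', mem_insert] at hk'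
      rcases hk' with rfl | hk'
      · exact le_refl _
      · exact le_of_lt (hblt k' (mem_of_mem_erase hk'))
  · -- (iii) the failed conditional stays failed
    intro hfail _ a' ha' c hc
    rcases hcase with ⟨a, ha, -, hab, -⟩ | ⟨-, p, hp, hW'⟩
    · exact absurd (hfail a ha b hb) (not_lt.2 hab)
    · obtain ⟨hpV, hpU⟩ := mem_sdiff.1 hp
      obtain ⟨hcU, hcV1⟩ := mem_sdiff.1 hc
      rw [hW'] at hcV1 ha'
      have hcb : c ≠ b := fun h => hcV1 (h ▸ mem_insert_self _ _)
      have hcV : c ∉ V j := by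
        intro h
        exact hcV1 (mem_insert_of_mem (mem_erase.2 ⟨fun h' => hpU (h' ▸ hcU), h⟩))
      rcases mem_insert.1 ha' with rfl | ha'
      · exact lt_of_le_of_ne (hbmax c (mem_sdiff.2 ⟨hcU, hcV⟩)) (fun h => hcb (hinj h))
      · exact hfail a' (mem_of_mem_erase ha') c (mem_sdiff.2 ⟨hcU, hcV⟩)
end
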